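/- arXiv:1302.4785 — 2 statements merged into one kernel-verified Lean document; each statement's English description precedes it below -/
import Mathlib

section
/- Let n ≥ 1, let λ_1, …, λ_n be positive reals, and let P > 0. Suppose μ > 0 satisfies Σ_{i=1}^{n} max(μ − 1/λ_i, 0) = P, and set p_i = max(μ − 1/λ_i, 0) (the water-filling power allocation). Then for every q ∈ ℝ^n with q_i ≥ 0 for all i and Σ_{i=1}^{n} q_i ≤ P, one has Σ_{i=1}^{n} log(1 + q_i λ_i) ≤ Σ_{i=1}^{n} log(1 + p_i λ_i). -/
/-!
Each summand `x ↦ log (1 + x * a) - x / μ` of the Lagrangian is concave on `x ≥ 0`, and the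
water-filling power `max (μ - 1 / a) 0` satisfies its KKT condition, so it maximizes the
summand. Summing over the channels, `∑ log (1 + q i * a i) - ∑ q i / μ` is at most the same
expression at the water-filling allocation, and `∑ q i ≤ ∑ p i` finishes the proof.
-/

open Finset

noncomputable def waterfillPower (μ a : ℝ) : ℝ := max (μ - 1 / a) 0

theorem Real.log_le_log_add_sub_div {x y : ℝ} (hx : 0 < x) (hy : 0 < y) :
    Real.log x ≤ Real.log y + (x - y) / y := by
  have h := Real.log_le_sub_one_of_pos (div_pos hx hy)
  rw [Real.log_div hx.ne' hy.ne', div_sub_one hy.ne'] at h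
  linarith

theorem log_one_add_mul_le_tangent {a p q : ℝ} (ha : 0 < a) (hp : 0 ≤ p) (hq : 0 ≤ q) :
    Real.log (1 + q * a) ≤ Real.log (1 + p * a) + (q - p) * a / (1 + p * a) := by
  have h := Real.log_le_log_add_sub_div (x := 1 + q * a) (y := 1 + p * a)
    (by positivity) (by positivity)
  rwa [show 1 + q * a - (1 + p * a) = (q - p) * a by ring] at h

theorem mul_div_one_add_waterfillPower_mul_le {μ a q : ℝ} (hμ : 0 < μ) (ha : 0 < a)
    (hq : 0 ≤ q) :
    (q - waterfillPower μ a) * a / (1 + waterfillPower μ a * a) ≤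
      (q - waterfillPower μ a) / μ := by
  unfold waterfillPower
  rcases le_or_gt (μ - 1 / a) 0 with h | h
  · -- channel below the water level: the marginal gain `a` is at most `1 / μ`
    rw [max_eq_right h, sub_zero, zero_mul, add_zero, div_one, div_eq_mul_one_div q μ]
    have : a ≤ 1 / μ := by
      rw [le_div_iff₀ hμ]
      rw [sub_nonpos, le_div_iff₀ ha] at h
      linarith
    exact mul_le_mul_of_nonneg_left this hq
  · -- active channel: the marginal gain equals `1 / μ`
    rw [max_eq_left h.le, show 1 + (μ - 1 / a) * a = μ * a by field_simp; ring,
      mul_div_mul_right _ _ ha.ne']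

theorem log_one_add_mul_le_waterfillPower {μ a q : ℝ} (hμ : 0 < μ) (ha : 0 < a)
    (hq : 0 ≤ q) :
    Real.log (1 + q * a) ≤
      Real.log (1 + waterfillPower μ a * a) + (q - waterfillPower μ a) / μ :=
  (log_one_add_mul_le_tangent ha (le_max_right (μ - 1 / a) 0) hq).trans
    (add_le_add_right (mul_div_one_add_waterfillPower_mul_le hμ ha hq) _)

theorem sum_log_one_add_mul_le_waterfillPower {ι : Type*} [Fintype ι] {a q : ι → ℝ}
    {μ : ℝ} (hμ : 0 < μ) (ha : ∀ i, 0 < a i) (hq : ∀ i, 0 ≤ q i)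
    (hbudget : ∑ i, q i ≤ ∑ i, waterfillPower μ (a i)) :
    ∑ i, Real.log (1 + q i * a i) ≤ ∑ i, Real.log (1 + waterfillPower μ (a i) * a i) := by
  have hslack : ∑ i, (q i - waterfillPower μ (a i)) / μ ≤ 0 := by
    rw [← sum_div, sum_sub_distrib]
    exact div_nonpos_of_nonpos_of_nonneg (sub_nonpos.2 hbudget) hμ.le
  calc ∑ i, Real.log (1 + q i * a i)
      ≤ ∑ i, (Real.log (1 + waterfillPower μ (a i) * a i) +
          (q i - waterfillPower μ (a i)) / μ) :=
        sum_le_sum fun i _ => log_one_add_mul_le_waterfillPower hμ (ha i) (hq i)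
    _ ≤ ∑ i, Real.log (1 + waterfillPower μ (a i) * a i) := by
        rw [sum_add_distrib]
        linarith

theorem waterfilling_optimal_general
    (n : ℕ) (lam : Fin n → ℝ) (hlam : ∀ i, 0 < lam i)
    (P : ℝ) (μ : ℝ) (hμ : 0 < μ)
    (hsum : ∑ i, max (μ - 1 / lam i) 0 = P)
    (q : Fin n → ℝ) (hq : ∀ i, 0 ≤ q i) (hqP : ∑ i, q i ≤ P) :
    ∑ i, Real.log (1 + q i * lam i) ≤
      ∑ i, Real.log (1 + max (μ - 1 / lam i) 0 * lam i) :=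
  sum_log_one_add_mul_le_waterfillPower hμ hlam hq (hsum ▸ hqP)

/-- Optimality of water-filling for parallel Gaussian channels: if `μ > 0` is a water
level such that the powers `p i = max (μ - 1 / lam i) 0` sum to the budget `P`, then the
water-filling allocation maximizes `∑ i, log (1 + q i * lam i)` among all nonnegative
power allocations `q` with `∑ i, q i ≤ P`. -/
theorem waterfilling_optimal
    (n : ℕ) (hn : 1 ≤ n) (lam : Fin n → ℝ) (hlam : ∀ i, 0 < lam i)
    (P : ℝ) (hP : 0 < P) (μ : ℝ) (hμ : 0 < μ)
    (hsum : ∑ i, max (μ - 1 / lam i) 0 = P)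
    (q : Fin n → ℝ) (hq : ∀ i, 0 ≤ q i) (hqP : ∑ i, q i ≤ P) :
    ∑ i, Real.log (1 + q i * lam i) ≤
      ∑ i, Real.log (1 + max (μ - 1 / lam i) 0 * lam i) :=
  waterfilling_optimal_general n lam hlam P μ hμ hsum q hq hqP
end

section
/- Let N ≥ m ≥ 1, let G be a complex matrix of size N × m, and let λ_1 ≥ … ≥ λ_m ≥ 0 be the eigenvalues of Gᴴ G in non-increasing order, with λ_1 > 0. Let P > 0, let μ > 0 satisfy Σ_{i : λ_i > 0} max(μ − 1/λ_i, 0) = P, and set p_i = max(μ − 1/λ_i, 0) for λ_i > 0 and p_i = 0 for λ_i = 0. Then for every m × m Hermitian positive semidefinite matrix Σ with trace(Σ) ≤ P, one has det( I_N + G Σ Gᴴ ) ≤ Π_{i=1}^{m} (1 + p_i λ_i). -/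
open Matrix ComplexOrder

/-!
Rotating the input covariance into the eigenbasis of `Gᴴ G` and applying Sylvester's identity
`det (1 + A B) = det (1 + B A)` turns the objective into `det (1 + R T R)`, where `R` is the
square root of the eigenvalue matrix and `T` is the rotated covariance, whose trace is still at
most `P`. Hadamard's inequality bounds this determinant by `∏ (1 + λᵢ tᵢ)` with `tᵢ` the diagonal
of `T`, reducing everything to a scalar power allocation. There, concavity of `log` bounds each
`log (1 + tᵢ λᵢ)` by its tangent line at the water-filling power `pᵢ`, whose slope is `1/μ` when
`pᵢ > 0` and at most `1/μ` when `pᵢ = 0`; summing and using `∑ tᵢ ≤ ∑ pᵢ` gives the bound.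
-/

noncomputable def waterfill (μ lam : ℝ) : ℝ := if 0 < lam then max (μ - 1 / lam) 0 else 0

lemma waterfill_nonneg (μ lam : ℝ) : 0 ≤ waterfill μ lam := by
  unfold waterfill; split_ifs <;> simp

lemma sub_waterfill_mul_div_le {μ lam : ℝ} (t : ℝ) (hμ : 0 < μ) (ht : 0 ≤ t) :
    (t - waterfill μ lam) * lam / (1 + waterfill μ lam * lam) ≤ (t - waterfill μ lam) / μ := by
  unfold waterfill
  split_ifs with hlam
  · rcases le_total (μ - 1 / lam) 0 with hdry | hwet
    · rw [max_eq_right hdry, sub_zero, zero_mul, add_zero, div_one]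
      rw [le_div_iff₀ hμ]
      have : μ * lam ≤ 1 := by rwa [sub_nonpos, le_div_iff₀ hlam] at hdry
      nlinarith
    · rw [max_eq_left hwet]
      have : 1 + (μ - 1 / lam) * lam = μ * lam := by field_simp; ring
      rw [this, mul_div_mul_right _ _ hlam.ne']
  · simp only [zero_mul, add_zero, sub_zero, div_one]
    exact (mul_nonpos_of_nonneg_of_nonpos ht (not_lt.mp hlam)).trans (by positivity)

lemma log_one_add_mul_le_waterfill {μ lam t : ℝ} (hμ : 0 < μ) (hlam : 0 ≤ lam) (ht : 0 ≤ t) :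
    Real.log (1 + t * lam) ≤
      Real.log (1 + waterfill μ lam * lam) + (t - waterfill μ lam) / μ := by
  set w := waterfill μ lam
  have hw : 0 < 1 + w * lam := by have := waterfill_nonneg μ lam; positivity
  have tangent := Real.log_le_sub_one_of_pos (x := (1 + t * lam) / (1 + w * lam)) (by positivity)
  rw [Real.log_div (by positivity) hw.ne'] at tangent
  have : (1 + t * lam) / (1 + w * lam) - 1 = (t - w) * lam / (1 + w * lam) := by
    rw [div_sub_one hw.ne']; ring
  linarith [sub_waterfill_mul_div_le (lam := lam) t hμ ht]

theorem prod_one_add_mul_le_waterfill {ι : Type*} [Fintype ι] {μ : ℝ} (hμ : 0 < μ)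
    {lam t : ι → ℝ} (hlam : ∀ i, 0 ≤ lam i) (ht : ∀ i, 0 ≤ t i)
    (hsum : ∑ i, t i ≤ ∑ i, waterfill μ (lam i)) :
    ∏ i, (1 + t i * lam i) ≤ ∏ i, (1 + waterfill μ (lam i) * lam i) := by
  have hpos : ∀ q : ι → ℝ, (∀ i, 0 ≤ q i) → ∀ i, 0 < 1 + q i * lam i := fun q hq i => by
    have := hq i; have := hlam i; positivity
  rw [← Real.log_le_log_iff (Finset.prod_pos fun i _ => hpos t ht i)
      (Finset.prod_pos fun i _ => hpos _ (fun i => waterfill_nonneg μ (lam i)) i),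
    Real.log_prod fun i _ => (hpos t ht i).ne',
    Real.log_prod fun i _ => (hpos _ (fun i => waterfill_nonneg μ (lam i)) i).ne']
  calc ∑ i, Real.log (1 + t i * lam i)
      ≤ ∑ i, (Real.log (1 + waterfill μ (lam i) * lam i) + (t i - waterfill μ (lam i)) / μ) :=
        Finset.sum_le_sum fun i _ => log_one_add_mul_le_waterfill hμ (hlam i) (ht i)
    _ = ∑ i, Real.log (1 + waterfill μ (lam i) * lam i)
          + (∑ i, t i - ∑ i, waterfill μ (lam i)) / μ := by
        rw [Finset.sum_add_distrib, ← Finset.sum_div, Finset.sum_sub_distrib]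
    _ ≤ ∑ i, Real.log (1 + waterfill μ (lam i) * lam i) := by
        have : (∑ i, t i - ∑ i, waterfill μ (lam i)) / μ ≤ 0 :=
          div_nonpos_of_nonpos_of_nonneg (by linarith) hμ.le
        linarith

lemma Real.prod_le_one_of_sum_le_card {ι : Type*} [Fintype ι] {x : ι → ℝ} (hx : ∀ i, 0 ≤ x i)
    (hsum : ∑ i, x i ≤ Fintype.card ι) : ∏ i, x i ≤ 1 :=
  calc ∏ i, x i ≤ ∏ i, Real.exp (x i - 1) :=
        Finset.prod_le_prod (fun i _ => hx i) fun i _ => by linarith [Real.add_one_le_exp (x i - 1)]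
    _ = Real.exp (∑ i, x i - Fintype.card ι) := by
        rw [← Real.exp_sum, Finset.sum_sub_distrib]; simp
    _ ≤ 1 := Real.exp_le_one_iff.mpr (by linarith)

namespace Matrix

variable {𝕜 n : Type*} [RCLike 𝕜] [Fintype n] [DecidableEq n]

lemma PosDef.re_det_le_one_of_diag_eq_one {N : Matrix n n 𝕜} (hN : N.PosDef)
    (hdiag : ∀ i, N i i = 1) : RCLike.re N.det ≤ 1 := by
  have hdet : RCLike.re N.det = ∏ i, hN.1.eigenvalues i := by
    rw [hN.1.det_eq_prod_eigenvalues, ← RCLike.ofReal_prod, RCLike.ofReal_re]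
  have htrace : ∑ i, hN.1.eigenvalues i = Fintype.card n := by
    have := congrArg RCLike.re hN.1.trace_eq_sum_eigenvalues
    rw [← RCLike.ofReal_sum, RCLike.ofReal_re] at this
    simp [← this, trace, hdiag]
  rw [hdet]
  exact Real.prod_le_one_of_sum_le_card (fun i => (hN.eigenvalues_pos i).le) htrace.le

/-- Hadamard's inequality: rescaling by `diagonal (1 / √Mᵢᵢ)` normalises the diagonal to `1`. -/
theorem PosDef.re_det_le_prod_re_diag {M : Matrix n n 𝕜} (hM : M.PosDef) :
    RCLike.re M.det ≤ ∏ i, RCLike.re (M i i) := by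
  set d : n → ℝ := fun i => RCLike.re (M i i)
  have hd : ∀ i, 0 < d i := fun i => (RCLike.pos_iff.mp hM.diag_pos).1
  set c : n → ℝ := fun i => (√(d i))⁻¹
  have hc : ∀ i, c i * c i * d i = 1 := fun i => by
    simp only [c, ← mul_inv, Real.mul_self_sqrt (hd i).le, inv_mul_cancel₀ (hd i).ne']
  set E : Matrix n n 𝕜 := diagonal fun i => (c i : 𝕜)
  have hE : IsUnit E := by
    rw [isUnit_iff_isUnit_det, det_diagonal, ← RCLike.ofReal_prod, isUnit_iff_ne_zero,
      RCLike.ofReal_ne_zero]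
    exact Finset.prod_ne_zero_iff.mpr fun i _ => (inv_pos.mpr (Real.sqrt_pos.mpr (hd i))).ne'
  have hEstar : star E = E := by simp [E, star_eq_conjTranspose, diagonal_conjTranspose]
  have hN : (E * M * E).PosDef := by
    simpa [hEstar] using (hE.posDef_star_right_conjugate_iff (x := M)).mpr hM
  have hNdiag : ∀ i, (E * M * E) i i = 1 := fun i => by
    simp only [E, diagonal_mul, mul_diagonal]
    rw [← hM.1.coe_re_apply_self i]
    exact_mod_cast (mul_right_comm _ _ _).trans (hc i)
  have hdetN : RCLike.re (E * M * E).det = (∏ i, c i * c i) * RCLike.re M.det := by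
    rw [det_mul, det_mul, det_diagonal, ← RCLike.ofReal_prod, RCLike.re_mul_ofReal,
      RCLike.re_ofReal_mul, Finset.prod_mul_distrib]
    ring
  have hcd : (∏ i, c i * c i) * ∏ i, d i = 1 := by
    rw [← Finset.prod_mul_distrib, Finset.prod_congr rfl fun i _ => hc i, Finset.prod_const_one]
  calc RCLike.re M.det = (∏ i, d i) * ((∏ i, c i * c i) * RCLike.re M.det) := by
        rw [← mul_assoc, mul_comm (∏ i, d i), hcd, one_mul]
    _ ≤ (∏ i, d i) * 1 :=
        mul_le_mul_of_nonneg_left (hdetN ▸ hN.re_det_le_one_of_diag_eq_one hNdiag)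
          (Finset.prod_nonneg fun i _ => (hd i).le)
    _ = ∏ i, RCLike.re (M i i) := mul_one _

lemma det_one_add_mul_mul_conjTranspose_eq {α k : Type*} [CommRing α] [StarRing α] [Fintype k]
    [DecidableEq k] {G : Matrix k n α} {U R : Matrix n n α} (S : Matrix n n α)
    (hG : Gᴴ * G = U * (R * R) * star U) :
    (1 + G * S * Gᴴ).det = (1 + R * (star U * S * U) * R).det :=
  calc (1 + G * S * Gᴴ).det = (1 + S * (Gᴴ * G)).det := by
        rw [Matrix.mul_assoc, det_one_add_mul_comm, Matrix.mul_assoc]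
    _ = (1 + star U * S * U * R * R).det := by
        rw [hG, ← Matrix.mul_assoc, ← Matrix.mul_assoc, det_one_add_mul_comm]
        simp only [Matrix.mul_assoc]
    _ = (1 + R * (star U * S * U) * R).det := by
        rw [det_one_add_mul_comm]
        simp only [Matrix.mul_assoc]

lemma PosSemidef.re_det_one_add_mul_mul_conjTranspose_le {k : Type*} [Fintype k] [DecidableEq k]
    {G : Matrix k n 𝕜} (hG : (Gᴴ * G).IsHermitian) {S : Matrix n n 𝕜} (hS : S.PosSemidef) :
    RCLike.re (1 + G * S * Gᴴ).det ≤ ∏ i, (1 + hG.eigenvalues i *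
      RCLike.re ((star (hG.eigenvectorUnitary : Matrix n n 𝕜) * S * hG.eigenvectorUnitary) i i)) := by
  set U : Matrix n n 𝕜 := (hG.eigenvectorUnitary : Matrix n n 𝕜)
  set T := star U * S * U
  have hev : ∀ i, 0 ≤ hG.eigenvalues i := (posSemidef_conjTranspose_mul_self G).eigenvalues_nonneg
  set R : Matrix n n 𝕜 := diagonal fun i => (√(hG.eigenvalues i) : 𝕜)
  have hRstar : Rᴴ = R := by simp [R, diagonal_conjTranspose]
  have hGG : Gᴴ * G = U * (R * R) * star U := by
    conv_lhs => rw [hG.spectral_theorem, Unitary.conjStarAlgAut_apply]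
    congr 2
    rw [diagonal_mul_diagonal]
    congr 1
    ext i
    simp only [Function.comp_apply, ← RCLike.ofReal_mul, Real.mul_self_sqrt (hev i)]
  have hT : T.PosSemidef := by
    simpa [T, star_eq_conjTranspose] using hS.conjTranspose_mul_mul_same U
  have hM : (1 + R * T * R).PosDef := by
    refine PosDef.one.add_posSemidef ?_
    simpa [hRstar] using hT.conjTranspose_mul_mul_same R
  rw [det_one_add_mul_mul_conjTranspose_eq S hGG]
  refine hM.re_det_le_prod_re_diag.trans_eq (Finset.prod_congr rfl fun i _ => ?_)
  simp only [R, add_apply, one_apply_eq, diagonal_mul, mul_diagonal, map_add, RCLike.one_re]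
  rw [mul_right_comm, ← RCLike.ofReal_mul, Real.mul_self_sqrt (hev i), RCLike.re_ofReal_mul]

end Matrix

theorem det_le_waterfilling_bound_general
    (N m : ℕ)
    (G : Matrix (Fin N) (Fin m) ℂ)
    (hG : (Gᴴ * G).IsHermitian)
    (lam : Fin m → ℝ)
    (hnonneg : ∀ i, 0 ≤ lam i)
    (heig : ∃ e : Fin m ≃ Fin m, ∀ i, lam i = hG.eigenvalues (e i))
    (P μ : ℝ) (hμ : 0 < μ)
    (p : Fin m → ℝ)
    (hp : ∀ i, p i = if 0 < lam i then max (μ - 1 / lam i) 0 else 0)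
    (hpsum : ∑ i, p i = P)
    (S : Matrix (Fin m) (Fin m) ℂ) (hS : S.PosSemidef)
    (htr : S.trace.re ≤ P) :
    (1 + G * S * Gᴴ).det.re ≤ ∏ i, (1 + p i * lam i) := by
  obtain ⟨e, he⟩ := heig
  set U : Matrix (Fin m) (Fin m) ℂ := (hG.eigenvectorUnitary : Matrix (Fin m) (Fin m) ℂ)
  set t : Fin m → ℝ := fun i => ((star U * S * U) i i).re
  have ht : ∀ i, 0 ≤ t i := fun i =>
    (Complex.nonneg_iff.mp (hS.conjTranspose_mul_mul_same U).diag_nonneg).1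
  have htsum : ∑ i, t i = S.trace.re := by
    rw [← Complex.re_sum]
    change (trace (star U * S * U)).re = _
    rw [trace_mul_cycle, Unitary.mul_star_self_of_mem hG.eigenvectorUnitary.2, Matrix.one_mul]
  have hpw : ∀ i, p i = waterfill μ (lam i) := hp
  calc (1 + G * S * Gᴴ).det.re ≤ ∏ i, (1 + hG.eigenvalues i * t i) :=
        hS.re_det_one_add_mul_mul_conjTranspose_le hG
    _ = ∏ i, (1 + t (e i) * lam i) := by
        rw [← e.prod_comp]
        simp only [he, mul_comm]
    _ ≤ ∏ i, (1 + waterfill μ (lam i) * lam i) := by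
        refine prod_one_add_mul_le_waterfill hμ hnonneg (fun i => ht (e i)) ?_
        calc ∑ i, t (e i) = S.trace.re := (e.sum_comp t).trans htsum
          _ ≤ ∑ i, p i := hpsum ▸ htr
          _ = ∑ i, waterfill μ (lam i) := Finset.sum_congr rfl fun i _ => hpw i
    _ = ∏ i, (1 + p i * lam i) := by simp only [hpw]

/-- Converse part of Proposition 2: among all positive semidefinite input covariance
matrices `S` with `trace S ≤ P`, the objective `det (1 + G * S * Gᴴ)` is bounded by the
water-filling value `∏ i, (1 + p i * lam i)`, where `lam` are the eigenvalues of
`Gᴴ * G` in non-increasing order and `p` is the water-filling allocation with water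
level `μ`. -/
theorem det_le_waterfilling_bound
    (N m : ℕ) (hm : 1 ≤ m) (hNm : m ≤ N)
    (G : Matrix (Fin N) (Fin m) ℂ)
    (hG : (Gᴴ * G).IsHermitian)
    (lam : Fin m → ℝ)
    (hmono : ∀ i j : Fin m, i ≤ j → lam j ≤ lam i)
    (hnonneg : ∀ i, 0 ≤ lam i)
    (heig : ∃ e : Fin m ≃ Fin m, ∀ i, lam i = hG.eigenvalues (e i))
    (hlam1 : 0 < lam ⟨0, hm⟩)
    (P μ : ℝ) (hP : 0 < P) (hμ : 0 < μ)
    (p : Fin m → ℝ)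
    (hp : ∀ i, p i = if 0 < lam i then max (μ - 1 / lam i) 0 else 0)
    (hpsum : ∑ i, p i = P)
    (S : Matrix (Fin m) (Fin m) ℂ) (hS : S.PosSemidef)
    (htr : S.trace.re ≤ P) :
    (1 + G * S * Gᴴ).det.re ≤ ∏ i, (1 + p i * lam i) :=
  det_le_waterfilling_bound_general N m G hG lam hnonneg heig P μ hμ p hp hpsum S hS htr
end
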